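/- Every nonempty word has exactly one normal decomposition; consequently, for every t ≥ 1, Σ_{l≥1} Σ_{(k₁,…,k_l) : k₁ ≥ 1, k_i ≥ 2 for i ≥ 2, k₁+⋯+k_l = t} W_{k₁⋯k_l} = 3^t. Moreover, the number of blocks l of the normal decomposition of σ equals ω(σ). -/

import Mathlib

open Filter Finset

/-- A letter of the alphabet `{1,2,3}`. -/
abbrev Letter := Fin 3

/-- A word: a finite (possibly empty) sequence of letters. -/
abbrev Word := List Letter

/-- Adjacency of two words: `σ ≠ τ`, and writing `σ = β ++ σ'`, `τ = β ++ τ'` with `β`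
the longest common prefix, either one of `σ'`, `τ'` is empty and the other uses at most two
distinct letters, or `σ' = i j^k` and `τ' = j i^{k'}` for distinct letters `i ≠ j`. -/
def WordAdj (σ τ : Word) : Prop :=
  σ ≠ τ ∧ ∃ β σ' τ' : Word,
    σ = β ++ σ' ∧ τ = β ++ τ' ∧
    ((σ' = [] ∧ τ'.toFinset.card ≤ 2) ∨
     (τ' = [] ∧ σ'.toFinset.card ≤ 2) ∨
     (∃ (i j : Letter) (k k' : ℕ), i ≠ j ∧
        σ' = i :: List.replicate k j ∧ τ' = j :: List.replicate k' i))

/-- The graph `G_t`: vertices are the words of length at most `t` (all other words are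
isolated), with adjacency `WordAdj`. -/
def Gt (t : ℕ) : SimpleGraph Word where
  Adj σ τ := σ.length ≤ t ∧ τ.length ≤ t ∧ WordAdj σ τ
  symm := by
    constructor
    rintro σ τ ⟨h1, h2, hne, β, σ', τ', e1, e2, h3⟩
    refine ⟨h2, h1, hne.symm, β, τ', σ', e2, e1, ?_⟩
    rcases h3 with h | h | ⟨i, j, k, k', hij, hs, ht⟩
    · exact Or.inr (Or.inl h)
    · exact Or.inl h
    · exact Or.inr (Or.inr ⟨j, i, k', k, hij.symm, ht, hs⟩)
  loopless := ⟨fun σ h => h.2.2.1 rfl⟩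

/-- `dW t σ τ` is the geodesic distance `d_t(σ,τ)` in the graph `G_t`. -/
noncomputable def dW (t : ℕ) (σ τ : Word) : ℕ := (Gt t).dist σ τ

/-- Length of the longest suffix of `σ` using at most two distinct letters. -/
def suffLen (σ : Word) : ℕ :=
  Nat.findGreatest (fun m => (σ.drop (σ.length - m)).toFinset.card ≤ 2) σ.length

/-- `fW σ = τ₂` where `σ = τ₂τ₁` and `τ₁` is the longest suffix of `σ` using at most two
distinct letters; `fW [] = []`. -/
def fW (σ : Word) : Word := σ.take (σ.length - suffLen σ)

/-- `ω(σ)`: the least `n ≥ 0` with `f^[n] σ = ∅`. -/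
noncomputable def omegaW (σ : Word) : ℕ := sInf {n : ℕ | fW^[n] σ = []}

/-- `L(σ) = d_{|σ|}(σ, ∅) - 1` for nonempty `σ`, and `L(∅) = 0`. -/
noncomputable def Lw (σ : Word) : ℕ := if σ = [] then 0 else dW σ.length σ [] - 1

/-- `ᾱ_m`: the average of `L` over the `3^m` words of length `m`. -/
noncomputable def alphaBar (m : ℕ) : ℝ :=
  (∑ v : Fin m → Letter, (Lw (List.ofFn v) : ℝ)) / 3 ^ m

/-- `α* = sup_{m ≥ 1} ᾱ_m / m`. -/
noncomputable def alphaStar : ℝ :=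
  sSup {x : ℝ | ∃ m : ℕ, 1 ≤ m ∧ x = alphaBar m / m}

/-- `#V_t = (3^{t+1} - 1)/2`, the number of vertices of `G_t`, as a real number. -/
noncomputable def Nv (t : ℕ) : ℝ := ((3 : ℝ) ^ (t + 1) - 1) / 2

/-- The sum of `d_t(σ,τ)` over all ordered pairs of words `σ, τ ∈ V_t`
(twice the sum over unordered pairs of distinct words). -/
noncomputable def pairSum (t : ℕ) : ℝ :=
  ∑ k ∈ range (t + 1), ∑ l ∈ range (t + 1),
    ∑ v : Fin k → Letter, ∑ w : Fin l → Letter,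
      (dW t (List.ofFn v) (List.ofFn w) : ℝ)

/-- The average path length `D̄(t)` of `G_t`. -/
noncomputable def Dbar (t : ℕ) : ℝ := pairSum t / (Nv t * (Nv t - 1))

/-- `κ_t = (Σ_{σ ∈ V_t} L(σ)) / #V_t`. -/
noncomputable def kappa (t : ℕ) : ℝ :=
  (∑ k ∈ range (t + 1), ∑ v : Fin k → Letter, (Lw (List.ofFn v) : ℝ)) / Nv t

/-- `π_t`: the sum of `d_t(σ,τ)` over unordered pairs of distinct `σ, τ ∈ V_t`. -/
noncomputable def piT (t : ℕ) : ℝ := pairSum t / 2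

/-- `μ_t`: the sum of `d_t(σ,τ)` over unordered pairs of distinct `σ, τ ∈ V_t`
having the same first letter. -/
noncomputable def muT (t : ℕ) : ℝ :=
  (∑ i : Letter, ∑ k ∈ range t, ∑ l ∈ range t,
    ∑ v : Fin k → Letter, ∑ w : Fin l → Letter,
      (dW t (i :: List.ofFn v) (i :: List.ofFn w) : ℝ)) / 2

/-- `λ_t = Σ_{σ ∈ V_t, σ ≠ ∅} d_t(σ, ∅)`. -/
noncomputable def lambdaT (t : ℕ) : ℝ :=
  ∑ k ∈ Finset.Icc 1 t, ∑ v : Fin k → Letter, (dW t (List.ofFn v) [] : ℝ)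

/-- `ν_t = Σ_{i<j} Σ_{|σ'|,|τ'| ≤ t-1} d_t(iσ', jτ')`. -/
noncomputable def nuT (t : ℕ) : ℝ :=
  ∑ i : Letter, ∑ j : Letter,
    if i < j then
      ∑ k ∈ range t, ∑ l ∈ range t,
        ∑ v : Fin k → Letter, ∑ w : Fin l → Letter,
          (dW t (i :: List.ofFn v) (j :: List.ofFn w) : ℝ)
    else 0

/-- `IsNormalDecomp σ τs`: `τs = [τ₁, …, τ_l]` (with `l ≥ 1`) is a normal decomposition
of `σ`: `σ = τ₁⋯τ_l`; `#τ₁ ≤ 2`, `|τ₁| ≥ 1`; `#τ_i = 2`, `|τ_i| ≥ 2` for `i ≥ 2`; and for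
`i < l` the last letter of `τ_i` is the unique letter of the alphabet not appearing
in `τ_{i+1}`. -/
def IsNormalDecomp (σ : Word) (τs : List Word) : Prop :=
  σ = τs.flatten ∧ τs ≠ [] ∧
  (∀ i : Fin τs.length,
    (i.1 = 0 → 1 ≤ (τs.get i).length ∧ (τs.get i).toFinset.card ≤ 2) ∧
    (1 ≤ i.1 → 2 ≤ (τs.get i).length ∧ (τs.get i).toFinset.card = 2)) ∧
  (∀ i : ℕ, ∀ h : i + 1 < τs.length,
    ∃ c : Letter, (τs.get ⟨i, Nat.lt_of_succ_lt h⟩).getLast? = some c ∧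
      c ∉ (τs.get ⟨i + 1, h⟩).toFinset ∧
      ∀ c' : Letter, c' ∉ (τs.get ⟨i + 1, h⟩).toFinset → c' = c)

/-- `W_{k₁⋯k_l}`: the number of words of length `k₁ + ⋯ + k_l` admitting a normal
decomposition into blocks of lengths `k₁, …, k_l`. -/
noncomputable def Wcount (ks : List ℕ) : ℕ :=
  Nat.card {σ : Word // ∃ τs : List Word, IsNormalDecomp σ τs ∧ τs.map List.length = ks}

/-- `Ē(t) = 3^{-t} Σ_{q ≥ 1} Σ_{k₁ ≥ 1, k₂,…,k_q ≥ 2, k₁+⋯+k_q = t} (q-1)·W_{k₁⋯k_q}`. -/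
noncomputable def Ebar (t : ℕ) : ℝ :=
  ((∑ c : Composition t,
      if ∀ i ∈ c.blocks.tail, 2 ≤ i then
        (c.blocks.length - 1) * Wcount c.blocks
      else 0 : ℕ) : ℝ) / 3 ^ t

/-! A normal decomposition is forced from the right. Its last block `τ` is the longest suffix
of `σ` using at most two letters: if there are earlier blocks, `τ` uses exactly two letters
and is preceded by the third one, so it cannot be extended. Hence the remaining blocks form a
normal decomposition of `f σ`, and by induction the normal decomposition is the list of blocks
peeled off by iterating `f`; in particular it exists, is unique and has `ω(σ)` blocks.
Sorting the `3^t` words of length `t` by the block lengths of their normal decomposition gives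
the counting identity, the inadmissible compositions contributing nothing. -/

theorem notMem_and_forall_notMem_eq_iff {s : Finset Letter} {c : Letter} :
    (c ∉ s ∧ ∀ c', c' ∉ s → c' = c) ↔ c ∉ s ∧ s.card = 2 := by
  revert s c
  decide

theorem card_le_two_and_two_lt_card_insert_iff {α : Type*} [DecidableEq α]
    {s : Finset α} {c : α} : s.card ≤ 2 ∧ 2 < (insert c s).card ↔ c ∉ s ∧ s.card = 2 := by
  by_cases hc : c ∈ s
  · simp [hc, Finset.insert_eq_of_mem]
  · rw [Finset.card_insert_of_notMem hc]
    simp only [hc, not_false_eq_true, true_and]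
    omega

def IsLink (ρ τ : Word) : Prop :=
  ∃ c : Letter, ρ.getLast? = some c ∧ c ∉ τ.toFinset ∧
    ∀ c' : Letter, c' ∉ τ.toFinset → c' = c

/-- `τ` uses at most two letters, and cannot be extended to the left inside `ρ ++ τ`
without using all three. -/
def IsMaxTwoLetterSuffix (ρ τ : Word) : Prop :=
  τ.toFinset.card ≤ 2 ∧ ∀ c ∈ ρ.getLast?, 2 < (insert c τ.toFinset).card

theorem IsLink.card_eq_two {ρ τ : Word} (h : IsLink ρ τ) : τ.toFinset.card = 2 := by
  obtain ⟨c, -, hc⟩ := h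
  exact (notMem_and_forall_notMem_eq_iff.1 hc).2

theorem IsLink.left_ne_nil {ρ τ : Word} (h : IsLink ρ τ) : ρ ≠ [] := by
  rintro rfl
  simp [IsLink] at h

theorem IsLink.two_le_length {ρ τ : Word} (h : IsLink ρ τ) : 2 ≤ τ.length :=
  h.card_eq_two ▸ List.toFinset_card_le _

theorem IsLink.ne_nil {ρ τ : Word} (h : IsLink ρ τ) : τ ≠ [] :=
  List.ne_nil_of_length_pos (by have := h.two_le_length; omega)

theorem isLink_iff_isMaxTwoLetterSuffix {ρ τ : Word} (hρ : ρ ≠ []) :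
    IsLink ρ τ ↔ IsMaxTwoLetterSuffix ρ τ := by
  obtain ⟨c, hc⟩ : ∃ c, ρ.getLast? = some c := ⟨_, List.getLast?_eq_some_getLast hρ⟩
  simp only [IsLink, IsMaxTwoLetterSuffix, hc, Option.some.injEq, exists_eq_left', Option.mem_def,
    forall_eq', notMem_and_forall_notMem_eq_iff, card_le_two_and_two_lt_card_insert_iff]

def lastBlock (σ : Word) : Word := σ.drop (σ.length - suffLen σ)

theorem fW_append_lastBlock (σ : Word) : fW σ ++ lastBlock σ = σ :=
  List.take_append_drop _ _

theorem suffLen_le (σ : Word) : suffLen σ ≤ σ.length := Nat.findGreatest_le _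

theorem card_toFinset_lastBlock_le (σ : Word) : (lastBlock σ).toFinset.card ≤ 2 :=
  Nat.findGreatest_spec (P := fun m => (σ.drop (σ.length - m)).toFinset.card ≤ 2)
    (Nat.zero_le _) (by simp)

theorem lastBlock_ne_nil {σ : Word} (hσ : σ ≠ []) : lastBlock σ ≠ [] := by
  have hpos : 0 < σ.length := List.length_pos_iff.2 hσ
  have hone : 1 ≤ suffLen σ :=
    Nat.le_findGreatest hpos ((List.toFinset_card_le _).trans (by simp; omega))
  rw [lastBlock, Ne, List.drop_eq_nil_iff]
  omega

theorem length_fW_lt {σ : Word} (hσ : σ ≠ []) : (fW σ).length < σ.length := by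
  have h := congrArg List.length (fW_append_lastBlock σ)
  have := List.length_pos_iff.2 (lastBlock_ne_nil hσ)
  rw [List.length_append] at h
  omega

theorem card_toFinset_drop_le_of_le {σ : Word} {m n : ℕ} (hmn : m ≤ n) :
    (σ.drop n).toFinset.card ≤ (σ.drop m).toFinset.card :=
  Finset.card_le_card fun _ hx =>
    List.mem_toFinset.2 ((List.drop_sublist_drop_left σ hmn).subset (List.mem_toFinset.1 hx))

theorem suffLen_append {ρ τ : Word} (h : IsMaxTwoLetterSuffix ρ τ) :
    suffLen (ρ ++ τ) = τ.length := by
  have hdrop : (ρ ++ τ).drop ((ρ ++ τ).length - τ.length) = τ := by simp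
  refine le_antisymm ?_ (Nat.le_findGreatest (by simp) (by rw [hdrop]; exact h.1))
  by_contra! hlt
  obtain ⟨ρ', c, rfl⟩ : ∃ ρ' c, ρ = ρ' ++ [c] := by
    rcases List.eq_nil_or_concat' ρ with rfl | hρ
    · exact absurd (suffLen_le τ) (by simpa using hlt)
    · exact hρ
  set σ := ρ' ++ [c] ++ τ
  have hc : σ.drop (σ.length - (τ.length + 1)) = c :: τ := by simp [σ]
  have hle := (card_toFinset_drop_le_of_le (σ := σ) (m := σ.length - suffLen σ)
    (n := σ.length - (τ.length + 1)) (by omega)).trans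
    (card_toFinset_lastBlock_le σ)
  rw [hc, List.toFinset_cons] at hle
  exact absurd (h.2 c (by simp)) (by omega)

theorem fW_append {ρ τ : Word} (h : IsMaxTwoLetterSuffix ρ τ) : fW (ρ ++ τ) = ρ := by
  simp [fW, suffLen_append h]

theorem lastBlock_append {ρ τ : Word} (h : IsMaxTwoLetterSuffix ρ τ) :
    lastBlock (ρ ++ τ) = τ := by
  simp [lastBlock, suffLen_append h]

theorem isMaxTwoLetterSuffix_fW_lastBlock (σ : Word) :
    IsMaxTwoLetterSuffix (fW σ) (lastBlock σ) := by
  refine ⟨card_toFinset_lastBlock_le σ, fun c hc => ?_⟩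
  obtain ⟨ρ, hρ⟩ := List.getLast?_eq_some_iff.1 hc
  have hσ : σ = ρ ++ c :: lastBlock σ := by simpa [hρ] using (fW_append_lastBlock σ).symm
  have hlen : σ.length = ρ.length + 1 + suffLen σ := by
    have h1 := congrArg List.length hσ
    have h2 := suffLen_le σ
    simp only [lastBlock, List.length_append, List.length_cons, List.length_drop] at h1
    omega
  have hdrop : σ.drop (σ.length - (suffLen σ + 1)) = c :: lastBlock σ := by
    rw [show σ.length - (suffLen σ + 1) = ρ.length by omega]
    conv_lhs => rw [hσ]
    exact List.drop_left' rfl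
  have := Nat.findGreatest_is_greatest (P := fun m => (σ.drop (σ.length - m)).toFinset.card ≤ 2)
    (Nat.lt_succ_self (suffLen σ)) (by omega)
  simp only [hdrop, List.toFinset_cons] at this
  omega

def normalDecomp (σ : Word) : List Word :=
  if σ = [] then [] else normalDecomp (fW σ) ++ [lastBlock σ]
termination_by σ.length
decreasing_by exact length_fW_lt ‹_›

theorem normalDecomp_nil : normalDecomp [] = [] := by
  rw [normalDecomp, if_pos rfl]

theorem normalDecomp_of_ne_nil {σ : Word} (hσ : σ ≠ []) :
    normalDecomp σ = normalDecomp (fW σ) ++ [lastBlock σ] := by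
  rw [normalDecomp, if_neg hσ]

theorem normalDecomp_eq_nil_iff {σ : Word} : normalDecomp σ = [] ↔ σ = [] := by
  refine ⟨fun h => ?_, fun h => h ▸ normalDecomp_nil⟩
  by_contra hσ
  simp [normalDecomp_of_ne_nil hσ] at h

theorem normalDecomp_append {ρ τ : Word} (h : IsMaxTwoLetterSuffix ρ τ) (hτ : τ ≠ []) :
    normalDecomp (ρ ++ τ) = normalDecomp ρ ++ [τ] := by
  rw [normalDecomp_of_ne_nil (by simp [hτ]), fW_append h, lastBlock_append h]

theorem flatten_normalDecomp (σ : Word) : (normalDecomp σ).flatten = σ := by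
  induction σ using normalDecomp.induct with
  | case1 => simp [normalDecomp_nil]
  | case2 σ hσ ih => simp [normalDecomp_of_ne_nil hσ, ih, fW_append_lastBlock]

theorem ne_nil_of_mem_normalDecomp {σ τ : Word} (hτ : τ ∈ normalDecomp σ) : τ ≠ [] := by
  induction σ using normalDecomp.induct with
  | case1 => simp [normalDecomp_nil] at hτ
  | case2 σ hσ ih =>
    rw [normalDecomp_of_ne_nil hσ, List.mem_append, List.mem_singleton] at hτ
    rcases hτ with hτ | rfl
    exacts [ih hτ, lastBlock_ne_nil hσ]

theorem iterate_fW_eq_nil_iff {σ : Word} {m : ℕ} :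
    fW^[m] σ = [] ↔ (normalDecomp σ).length ≤ m := by
  induction m generalizing σ with
  | zero => simp [normalDecomp_eq_nil_iff]
  | succ m ih =>
    rw [Function.iterate_succ_apply, ih]
    rcases eq_or_ne σ [] with rfl | hσ
    · simp [fW, normalDecomp_nil]
    · simp [normalDecomp_of_ne_nil hσ]

theorem omegaW_eq_length_normalDecomp (σ : Word) : omegaW σ = (normalDecomp σ).length := by
  simp only [omegaW, iterate_fW_eq_nil_iff]
  exact csInf_Ici

-- The conditions `#τᵢ = 2`, `|τᵢ| ≥ 2` on the later blocks are implied by their links.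
theorem isNormalDecomp_iff {σ : Word} {τs : List Word} :
    IsNormalDecomp σ τs ↔ σ = τs.flatten ∧
      (∃ τ ∈ τs.head?, τ ≠ [] ∧ τ.toFinset.card ≤ 2) ∧ τs.IsChain IsLink := by
  rw [List.isChain_iff_getElem]
  constructor
  · rintro ⟨hσ, hne, hblocks, hlinks⟩
    obtain ⟨τ, τs', rfl⟩ := List.exists_cons_of_ne_nil hne
    have hhead := (hblocks ⟨0, by simp⟩).1 rfl
    exact ⟨hσ, ⟨τ, rfl, List.length_pos_iff.1 hhead.1, hhead.2⟩, hlinks⟩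
  · rintro ⟨hσ, ⟨τ, hτ, hτne, hτcard⟩, hlinks⟩
    obtain ⟨τs', rfl⟩ := List.head?_eq_some_iff.1 hτ
    refine ⟨hσ, List.cons_ne_nil _ _, fun ⟨i, hi⟩ => ⟨?_, ?_⟩, hlinks⟩
    · rintro rfl
      exact ⟨List.length_pos_iff.2 hτne, hτcard⟩
    · intro h1
      obtain ⟨j, rfl⟩ := Nat.exists_eq_add_of_le' h1
      exact ⟨(hlinks j hi).two_le_length, (hlinks j hi).card_eq_two⟩

theorem IsNormalDecomp.ne_nil_of_mem {σ τ : Word} {τs : List Word} (h : IsNormalDecomp σ τs)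
    (hτ : τ ∈ τs) : τ ≠ [] := by
  obtain ⟨-, ⟨τ₀, hτ₀, hτ₀ne, -⟩, hlinks⟩ := isNormalDecomp_iff.1 h
  obtain ⟨i, hi, rfl⟩ := List.mem_iff_getElem.1 hτ
  rcases i with _ | j
  · rw [List.head?_eq_getElem?, List.getElem?_eq_getElem hi, Option.mem_def,
      Option.some_inj] at hτ₀
    exact hτ₀ ▸ hτ₀ne
  · exact (List.isChain_iff_getElem.1 hlinks j hi).ne_nil

theorem IsNormalDecomp.two_le_length_of_mem_tail {σ τ : Word} {τs : List Word}
    (h : IsNormalDecomp σ τs) (hτ : τ ∈ τs.tail) : 2 ≤ τ.length := by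
  obtain ⟨j, hj, rfl⟩ := List.mem_iff_getElem.1 hτ
  rw [List.getElem_tail]
  have hchain := List.isChain_iff_getElem.1 (isNormalDecomp_iff.1 h).2.2
  exact (hchain j (by simp at hj; omega)).two_le_length

theorem isNormalDecomp_singleton_iff {σ τ : Word} :
    IsNormalDecomp σ [τ] ↔ σ = τ ∧ τ ≠ [] ∧ τ.toFinset.card ≤ 2 := by
  simp [isNormalDecomp_iff]

theorem isLink_flatten_iff {τ : Word} {L : List Word} (hL : L ≠ [])
    (hlast : L.getLast hL ≠ []) :
    IsLink L.flatten τ ↔ IsLink (L.getLast hL) τ := by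
  have : L.flatten.getLast? = (L.getLast hL).getLast? := by
    conv_lhs => rw [← List.dropLast_append_getLast hL]
    simp [List.getLast?_append, List.getLast?_eq_some_getLast hlast]
  simp only [IsLink, this]

theorem isNormalDecomp_append_singleton_iff {σ τ : Word} {L : List Word} (hL : L ≠ []) :
    IsNormalDecomp σ (L ++ [τ]) ↔
      IsNormalDecomp L.flatten L ∧ σ = L.flatten ++ τ ∧ IsLink L.flatten τ := by
  rw [isNormalDecomp_iff, List.isChain_append, List.head?_append, List.head?_eq_some_head hL,
    Option.some_or, ← List.head?_eq_some_head hL, List.getLast?_eq_some_getLast hL]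
  simp only [List.flatten_append, List.flatten_singleton, List.isChain_singleton, true_and,
    List.head?_cons, Option.mem_some_iff, forall_eq']
  constructor
  · rintro ⟨hσ, hhead, hchain, hlink⟩
    exact ⟨isNormalDecomp_iff.2 ⟨rfl, hhead, hchain⟩, hσ,
      (isLink_flatten_iff hL hlink.left_ne_nil).2 hlink⟩
  · rintro ⟨hρ, hσ, hlink⟩
    obtain ⟨-, hhead, hchain⟩ := isNormalDecomp_iff.1 hρ
    exact ⟨hσ, hhead, hchain,
      (isLink_flatten_iff hL (IsNormalDecomp.ne_nil_of_mem hρ (List.getLast_mem hL))).1 hlink⟩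

theorem isNormalDecomp_normalDecomp {σ : Word} (hσ : σ ≠ []) :
    IsNormalDecomp σ (normalDecomp σ) := by
  induction σ using normalDecomp.induct with
  | case1 => exact absurd rfl hσ
  | case2 σ _ ih =>
    rw [normalDecomp_of_ne_nil hσ]
    have hmax := isMaxTwoLetterSuffix_fW_lastBlock σ
    have hsplit := fW_append_lastBlock σ
    rcases eq_or_ne (fW σ) [] with hfW | hfW
    · rw [hfW, List.nil_append] at hsplit
      rw [hfW, normalDecomp_nil, List.nil_append, isNormalDecomp_singleton_iff]
      exact ⟨hsplit.symm, lastBlock_ne_nil hσ, hmax.1⟩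
    · have hρ := ih hfW
      rw [isNormalDecomp_append_singleton_iff (mt normalDecomp_eq_nil_iff.1 hfW),
        flatten_normalDecomp]
      exact ⟨flatten_normalDecomp (fW σ) ▸ hρ, hsplit.symm,
        (isLink_iff_isMaxTwoLetterSuffix hfW).2 hmax⟩

theorem IsNormalDecomp.eq_normalDecomp {σ : Word} {τs : List Word} (h : IsNormalDecomp σ τs) :
    τs = normalDecomp σ := by
  induction τs using List.reverseRecOn generalizing σ with
  | nil => exact absurd rfl h.2.1
  | append_singleton L τ ih =>
    rcases eq_or_ne L [] with rfl | hL
    · obtain ⟨rfl, hτ, hcard⟩ := isNormalDecomp_singleton_iff.1 h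
      simpa [normalDecomp_nil] using (normalDecomp_append (ρ := []) ⟨hcard, by simp⟩ hτ).symm
    · obtain ⟨hρ, rfl, hlink⟩ := (isNormalDecomp_append_singleton_iff hL).1 h
      rw [normalDecomp_append ((isLink_iff_isMaxTwoLetterSuffix hlink.left_ne_nil).1 hlink)
        hlink.ne_nil, ← ih hρ]

theorem exists_isNormalDecomp_map_length_iff {σ : Word} {ks : List ℕ} :
    (∃ τs, IsNormalDecomp σ τs ∧ τs.map List.length = ks) ↔
      σ ≠ [] ∧ (normalDecomp σ).map List.length = ks := by
  constructor
  · rintro ⟨τs, h, rfl⟩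
    have hτs := IsNormalDecomp.eq_normalDecomp h
    exact ⟨fun hσ => h.2.1 (by rw [hτs, hσ, normalDecomp_nil]), by rw [hτs]⟩
  · rintro ⟨hσ, rfl⟩
    exact ⟨_, isNormalDecomp_normalDecomp hσ, rfl⟩

theorem sum_map_length_normalDecomp (σ : Word) :
    ((normalDecomp σ).map List.length).sum = σ.length := by
  rw [← List.length_flatten, flatten_normalDecomp]

def normalDecompComposition {t : ℕ} (v : List.Vector Letter t) : Composition t where
  blocks := (normalDecomp v.1).map List.length
  blocks_pos hk := by
    obtain ⟨τ, hτ, rfl⟩ := List.mem_map.1 hk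
    exact List.length_pos_iff.2 (ne_nil_of_mem_normalDecomp hτ)
  blocks_sum := by rw [sum_map_length_normalDecomp, v.2]

theorem wcount_eq_card_fiber {t : ℕ} (ht : 1 ≤ t) (c : Composition t) :
    Wcount c.blocks = Fintype.card {v : List.Vector Letter t // normalDecompComposition v = c} := by
  have key (σ : Word) : (∃ τs, IsNormalDecomp σ τs ∧ τs.map List.length = c.blocks) ↔
      ∃ h : σ.length = t, normalDecompComposition ⟨σ, h⟩ = c := by
    rw [exists_isNormalDecomp_map_length_iff]
    constructor
    · rintro ⟨-, hblocks⟩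
      have hlen : σ.length = t := by
        rw [← sum_map_length_normalDecomp, hblocks, c.blocks_sum]
      exact ⟨hlen, Composition.ext hblocks⟩
    · rintro ⟨hlen, rfl⟩
      exact ⟨List.ne_nil_of_length_pos (by omega), rfl⟩
  rw [Wcount, ← Nat.card_eq_fintype_card]
  exact Nat.card_congr <| (Equiv.subtypeEquivRight key).trans
    (Equiv.subtypeSubtypeEquivSubtypeExists (fun σ : Word ↦ σ.length = t)
      (normalDecompComposition · = c)).symm

theorem wcount_eq_zero_of_mem_tail_lt_two {ks : List ℕ} {k : ℕ} (hk : k ∈ ks.tail)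
    (hk2 : k < 2) :
    Wcount ks = 0 := by
  have : IsEmpty {σ : Word // ∃ τs, IsNormalDecomp σ τs ∧ τs.map List.length = ks} := by
    refine ⟨fun ⟨σ, τs, h, hτs⟩ => ?_⟩
    rw [← hτs, ← List.map_tail] at hk
    obtain ⟨τ, hτ, rfl⟩ := List.mem_map.1 hk
    exact absurd (IsNormalDecomp.two_le_length_of_mem_tail h hτ) (by omega)
  exact Nat.card_of_isEmpty

theorem sum_wcount_eq_three_pow {t : ℕ} (ht : 1 ≤ t) :
    (∑ c : Composition t,
      if ∀ i ∈ c.blocks.tail, 2 ≤ i then Wcount c.blocks else 0) = 3 ^ t :=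
  calc _ = ∑ c : Composition t, Wcount c.blocks := by
        refine Finset.sum_congr rfl fun c _ => ite_eq_left_iff.2 fun hc => ?_
        obtain ⟨k, hk, hk2⟩ := not_forall₂.1 hc
        exact (wcount_eq_zero_of_mem_tail_lt_two hk (not_le.1 hk2)).symm
    _ = ∑ c : Composition t, Fintype.card {v // normalDecompComposition v = c} := by
        simp only [wcount_eq_card_fiber ht]
    _ = Fintype.card (List.Vector Letter t) :=
        Fintype.card_sigma.symm.trans (Fintype.card_congr (Equiv.sigmaFiberEquiv _))
    _ = 3 ^ t := by simp

/-- Every nonempty word has exactly one normal decomposition; consequently for `t ≥ 1`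
the numbers `W_{k₁⋯k_l}` over all admissible `(k₁,…,k_l)` with `k₁+⋯+k_l = t` sum to `3^t`;
moreover the number of blocks of the normal decomposition of `σ` equals `ω(σ)`. -/
theorem normal_decomposition_unique :
    (∀ σ : Word, σ ≠ [] → ∃! τs : List Word, IsNormalDecomp σ τs) ∧
    (∀ t : ℕ, 1 ≤ t →
      (∑ c : Composition t,
        if ∀ i ∈ c.blocks.tail, 2 ≤ i then Wcount c.blocks else 0) = 3 ^ t) ∧
    (∀ (σ : Word) (τs : List Word), IsNormalDecomp σ τs → τs.length = omegaW σ) :=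
  ⟨fun _ hσ => ⟨_, isNormalDecomp_normalDecomp hσ, fun _ h => h.eq_normalDecomp⟩,
    fun _ => sum_wcount_eq_three_pow,
    fun σ _ h => h.eq_normalDecomp ▸ (omegaW_eq_length_normalDecomp σ).symm⟩
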